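/- arXiv:1604.07750 — 2 statements merged into one kernel-verified Lean document; each statement's English description precedes it below -/
import Mathlib

section
/- Let $Y$ and $Y'$ be independent nonnegative random variables, both regularly varying with the same index $\alpha' > 0$. Then the product $YY'$ is regularly varying with index $\alpha'$: there exists a slowly varying function $L_1$ such that $\P(YY' > x) = x^{-\alpha'} L_1(x)$. -/
/-!
Write `x = r ^ 2` and let `t ≥ 1`. The event `{t x < Y Y'}` is the disjoint union of its parts
where `Y' ≤ r`, where `Y ≤ r` (disjoint from the first since the factors are nonnegative), and
inside the corner `{r < Y, r < Y'}`. Conditioning on the factor that is at most `r`, the first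
two parts are integrals of tails of the other factor at levels `≥ r`, where the tail at `t u` is
uniformly close to `t ^ (-α)` times the tail at `u`; so these parts scale like `t ^ (-α)` when
`x` is replaced by `t x`. The corner has probability `P(Y > r) P(Y' > r)`, which is
`o(P(Y Y' > x))`: the disjoint dyadic strips `{r / 2 ^ (k + 1) < Y ≤ r / 2 ^ k, 2 ^ (k + 1) r < Y'}`
lie in `{x < Y Y'}` and each carries asymptotically the fraction `1 - 2 ^ (-α)` of
`P(Y > r) P(Y' > r)`. If one factor is bounded, the conditioning step alone suffices.
-/

open MeasureTheory ProbabilityTheory Real Set Filter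

def SlowlyVarying (L : ℝ → ℝ) : Prop :=
  ∀ t : ℝ, 0 < t → Tendsto (fun x => L (t * x) / L x) atTop (nhds 1)

open scoped Topology

def RegularlyVarying (f : ℝ → ℝ) (ρ : ℝ) : Prop :=
  ∀ t : ℝ, 0 < t → Tendsto (fun x => f (t * x) / f x) atTop (𝓝 (t ^ ρ))

theorem tendsto_div_iff_abs_sub_le {ι : Type*} {l : Filter ι} {f g : ι → ℝ} {a : ℝ}
    (hf : ∀ᶠ x in l, 0 < f x) :
    Tendsto (fun x => g x / f x) l (𝓝 a) ↔ ∀ ε > 0, ∀ᶠ x in l, |g x - a * f x| ≤ ε * f x := by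
  have key : ∀ ε, ∀ᶠ x in l, (|g x / f x - a| ≤ ε ↔ |g x - a * f x| ≤ ε * f x) := by
    intro ε
    filter_upwards [hf] with x hx
    rw [← abs_of_pos hx, ← mul_le_mul_iff_of_pos_right (abs_pos.2 hx.ne'), ← abs_mul, abs_of_pos hx,
      sub_mul, div_mul_cancel₀ _ hx.ne']
  constructor
  · intro h ε hε
    filter_upwards [Metric.tendsto_nhds.1 h ε hε, key ε] with x hx hkey
    exact hkey.1 (le_of_lt hx)
  · intro h
    refine Metric.tendsto_nhds.2 fun ε hε => ?_
    filter_upwards [h (ε / 2) (half_pos hε), key (ε / 2)] with x hx hkey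
    exact (hkey.2 hx).trans_lt (half_lt_self hε)

theorem SlowlyVarying.congr' {L L' : ℝ → ℝ} (hL : SlowlyVarying L) (h : L =ᶠ[atTop] L') :
    SlowlyVarying L' := by
  intro t ht
  refine (hL t ht).congr' ?_
  filter_upwards [h, (tendsto_id.const_mul_atTop ht).eventually h] with x hx htx
  rw [hx]; exact congrArg (· / L' x) htx

theorem slowlyVarying_of_eventuallyEq_const {L : ℝ → ℝ} {c : ℝ} (hc : c ≠ 0)
    (h : L =ᶠ[atTop] fun _ => c) : SlowlyVarying L := by
  refine SlowlyVarying.congr' (fun t _ => ?_) h.symm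
  simp only [div_self hc, tendsto_const_nhds]

theorem regularlyVarying_iff_slowlyVarying {f : ℝ → ℝ} {ρ : ℝ} :
    RegularlyVarying f ρ ↔ SlowlyVarying (fun x => x ^ (-ρ) * f x) := by
  refine forall₂_congr fun t ht => ?_
  have hratio : (fun x => t ^ (-ρ) * (f (t * x) / f x)) =ᶠ[atTop]
      fun x => (t * x) ^ (-ρ) * f (t * x) / (x ^ (-ρ) * f x) := by
    filter_upwards [eventually_gt_atTop 0] with x hx
    rw [mul_rpow ht.le hx.le]
    field_simp [(rpow_pos_of_pos hx (-ρ)).ne']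
  have hne : t ^ (-ρ) ≠ 0 := (rpow_pos_of_pos ht _).ne'
  have hone : t ^ (-ρ) * t ^ ρ = 1 := by rw [← rpow_add ht, neg_add_cancel, rpow_zero]
  rw [← tendsto_congr' hratio, ← hone]
  constructor
  · exact fun h => h.const_mul _
  · intro h
    simpa [← mul_assoc, inv_mul_cancel₀ hne] using h.const_mul (t ^ (-ρ))⁻¹

theorem RegularlyVarying.of_one_le {f : ℝ → ℝ} {ρ : ℝ}
    (h : ∀ t, 1 ≤ t → Tendsto (fun x => f (t * x) / f x) atTop (𝓝 (t ^ ρ))) :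
    RegularlyVarying f ρ := by
  intro t ht
  rcases le_or_gt 1 t with h1 | h1
  · exact h t h1
  have hinv := (h t⁻¹ (one_le_inv₀ ht |>.2 h1.le)).comp (tendsto_id.const_mul_atTop ht)
  convert hinv.inv₀ (rpow_pos_of_pos (inv_pos.2 ht) ρ).ne' using 2 with x
  · simp [← mul_assoc, inv_mul_cancel₀ ht.ne']
  · rw [inv_rpow ht.le, inv_inv]

section Tails

variable {Ω : Type*} [MeasurableSpace Ω] {μ : Measure Ω} {X Z : Ω → ℝ}

theorem measurable_measure_lt : Measurable fun u => μ {ω | u < X ω} :=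
  Antitone.measurable fun _ _ huv => measure_mono fun _ hω => lt_of_le_of_lt huv hω

theorem regularlyVarying_measureReal_lt_of_slowlyVarying {α : ℝ} {L : ℝ → ℝ}
    (hL : SlowlyVarying L)
    (htail : ∀ x : ℝ, 0 < x → μ {ω | X ω > x} = ENNReal.ofReal (x ^ (-α) * L x))
    (hpos : ∀ x : ℝ, 0 < x → μ {ω | X ω > x} ≠ 0) :
    RegularlyVarying (fun x => μ.real {ω | x < X ω}) (-α) := by
  rw [regularlyVarying_iff_slowlyVarying]
  refine hL.congr' ?_
  filter_upwards [eventually_gt_atTop 0] with x hx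
  have hprod : 0 < x ^ (-α) * L x := by
    by_contra! h
    exact hpos x hx (by rw [htail x hx, ENNReal.ofReal_eq_zero.2 h])
  rw [measureReal_def, show {ω | x < X ω} = {ω | X ω > x} from rfl, htail x hx,
    ENNReal.toReal_ofReal hprod.le, neg_neg, ← mul_assoc, ← rpow_add hx, add_neg_cancel,
    rpow_zero, one_mul]

theorem ProbabilityTheory.IndepFun.measureReal_inter_preimage_eq_mul (hXZ : IndepFun X Z μ)
    {s t : Set ℝ} (hs : MeasurableSet s) (ht : MeasurableSet t) :
    μ.real (X ⁻¹' s ∩ Z ⁻¹' t) = μ.real (X ⁻¹' s) * μ.real (Z ⁻¹' t) := by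
  simp only [measureReal_def, hXZ.measure_inter_preimage_eq_mul s t hs ht, ENNReal.toReal_mul]

theorem measureReal_lt_mul_le_eq_integral [IsFiniteMeasure μ] (hX : Measurable X)
    (hZ : Measurable Z) (hZnn : ∀ ω, 0 ≤ Z ω) (hXZ : IndepFun X Z μ) {z : ℝ} (hz : 0 < z) (r : ℝ) :
    μ.real {ω | z < X ω * Z ω ∧ Z ω ≤ r} = ∫ w in Ioc 0 r, μ.real {ω | z / w < X ω} ∂μ.map Z := by
  have hS : MeasurableSet {p : ℝ × ℝ | z < p.1 * p.2 ∧ p.2 ≤ r} :=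
    (measurableSet_lt measurable_const (measurable_fst.mul measurable_snd)).inter
      (measurableSet_le measurable_snd measurable_const)
  have hsection : ∀ᵐ w ∂μ.map Z, (μ.map X) {v | z < v * w ∧ w ≤ r}
      = (Ioc 0 r).indicator (fun w => μ {ω | z / w < X ω}) w := by
    filter_upwards [(ae_map_iff hZ.aemeasurable measurableSet_Ici).2 (ae_of_all μ hZnn)]
      with w (hw : 0 ≤ w)
    by_cases hwr : w ∈ Ioc 0 r
    · have hIoi : {v | z < v * w ∧ w ≤ r} = Ioi (z / w) := by
        ext v
        simp [div_lt_iff₀ hwr.1, hwr.2]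
      rw [indicator_of_mem hwr, hIoi, Measure.map_apply hX measurableSet_Ioi]
      rfl
    · rw [indicator_of_notMem hwr]
      convert measure_empty (μ := μ.map X)
      ext v
      simp only [mem_ofPred_eq, mem_empty_iff_false, iff_false, not_and]
      intro hv hw'
      rcases hw.eq_or_lt with rfl | hw0
      · rw [mul_zero] at hv
        linarith
      · exact hwr ⟨hw0, hw'⟩
  have hlintegral : μ {ω | z < X ω * Z ω ∧ Z ω ≤ r}
      = ∫⁻ w in Ioc 0 r, μ {ω | z / w < X ω} ∂μ.map Z := by
    rw [← lintegral_indicator measurableSet_Ioc, ← lintegral_congr_ae hsection]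
    rw [show {ω | z < X ω * Z ω ∧ Z ω ≤ r}
        = (fun ω => (X ω, Z ω)) ⁻¹' {p : ℝ × ℝ | z < p.1 * p.2 ∧ p.2 ≤ r} from rfl,
      ← Measure.map_apply (hX.prodMk hZ) hS,
      (indepFun_iff_map_prod_eq_prod_map_map hX.aemeasurable hZ.aemeasurable).1 hXZ,
      Measure.prod_apply_symm hS]
    rfl
  rw [measureReal_def, hlintegral, ← integral_toReal]
  · rfl
  · exact (measurable_measure_lt.comp (measurable_const.div measurable_id)).aemeasurable
  · exact ae_of_all _ fun _ => measure_lt_top μ _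

theorem integrable_measureReal_lt_div [IsFiniteMeasure μ] (ν : Measure ℝ) [IsFiniteMeasure ν]
    (z : ℝ) :
    Integrable (fun w => μ.real {ω | z / w < X ω}) ν := by
  refine Integrable.of_bound ?_ (μ.real univ) (ae_of_all _ fun w => ?_)
  · exact ((measurable_measure_lt.comp (measurable_const.div measurable_id)).ennreal_toReal
      ).aestronglyMeasurable
  · rw [Real.norm_of_nonneg measureReal_nonneg]
    exact measureReal_mono (subset_univ _)

theorem abs_measureReal_lt_mul_le_sub_le [IsFiniteMeasure μ] (hX : Measurable X) (hZ : Measurable Z)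
    (hZnn : ∀ ω, 0 ≤ Z ω) (hXZ : IndepFun X Z μ) {t x r a ε : ℝ} (ht : 0 < t) (hx : 0 < x)
    (hF : ∀ u, x / r ≤ u →
      |μ.real {ω | t * u < X ω} - a * μ.real {ω | u < X ω}| ≤ ε * μ.real {ω | u < X ω}) :
    |μ.real {ω | t * x < X ω * Z ω ∧ Z ω ≤ r} - a * μ.real {ω | x < X ω * Z ω ∧ Z ω ≤ r}|
      ≤ ε * μ.real {ω | x < X ω * Z ω ∧ Z ω ≤ r} := by
  simp only [measureReal_lt_mul_le_eq_integral hX hZ hZnn hXZ (mul_pos ht hx),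
    measureReal_lt_mul_le_eq_integral hX hZ hZnn hXZ hx, ← integral_const_mul]
  rw [← integral_sub (integrable_measureReal_lt_div _ _)
    ((integrable_measureReal_lt_div _ _).const_mul a)]
  rw [← Real.norm_eq_abs]
  refine norm_integral_le_of_norm_le ((integrable_measureReal_lt_div _ _).const_mul ε) ?_
  filter_upwards [ae_restrict_mem measurableSet_Ioc] with w ⟨hw0, hwr⟩
  rw [Real.norm_eq_abs, mul_div_assoc]
  exact hF _ (div_le_div_of_nonneg_left hx.le hw0 hwr)

/-- The second part is written as the first with `X` and `Z` exchanged, so that the same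
conditioning lemma applies to both. -/
theorem measureReal_lt_mul_eq_add [IsFiniteMeasure μ] (hX : Measurable X) (hZ : Measurable Z)
    (hXnn : ∀ ω, 0 ≤ X ω) (hZnn : ∀ ω, 0 ≤ Z ω) {z r : ℝ} (hz : r * r ≤ z) :
    μ.real {ω | z < X ω * Z ω} = μ.real {ω | z < X ω * Z ω ∧ Z ω ≤ r}
      + μ.real {ω | z < Z ω * X ω ∧ X ω ≤ r}
      + μ.real {ω | z < X ω * Z ω ∧ r < X ω ∧ r < Z ω} := by
  have hXZ : Measurable fun ω => X ω * Z ω := hX.mul hZ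
  rw [← measureReal_union, ← measureReal_union]
  · congr 1
    ext ω
    simp only [mem_union, mem_ofPred_eq, mul_comm (Z ω)]
    constructor
    · intro h
      by_cases hZr : Z ω ≤ r
      · exact Or.inl (Or.inl ⟨h, hZr⟩)
      by_cases hXr : X ω ≤ r
      · exact Or.inl (Or.inr ⟨h, hXr⟩)
      exact Or.inr ⟨h, not_le.1 hXr, not_le.1 hZr⟩
    · rintro ((h | h) | h) <;> exact h.1
  · refine disjoint_left.2 fun ω h h' => ?_
    simp only [mem_union, mem_ofPred_eq] at h h'
    rcases h with h | h <;> linarith [h.2, h'.2.1, h'.2.2]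
  · exact (measurableSet_lt measurable_const hXZ).inter
      ((measurableSet_lt measurable_const hX).inter (measurableSet_lt measurable_const hZ))
  · refine disjoint_left.2 fun ω h h' => ?_
    simp only [mem_ofPred_eq] at h h'
    have : X ω * Z ω ≤ r * r := mul_le_mul h'.2 h.2 (hZnn ω) ((hXnn ω).trans h'.2)
    linarith [h.1]
  · exact (measurableSet_lt measurable_const (hZ.mul hX)).inter
      (measurableSet_le hX measurable_const)

theorem measureReal_strip_eq [IsFiniteMeasure μ] (hX : Measurable X) (hXZ : IndepFun X Z μ)
    {a b : ℝ} (hab : a ≤ b) (c : ℝ) :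
    μ.real {ω | (a < X ω ∧ X ω ≤ b) ∧ c < Z ω}
      = (μ.real {ω | a < X ω} - μ.real {ω | b < X ω}) * μ.real {ω | c < Z ω} := by
  rw [← measureReal_sdiff (show {ω | b < X ω} ⊆ {ω | a < X ω} from fun _ h => hab.trans_lt h)
    (measurableSet_lt measurable_const hX)]
  have hIoc : {ω | a < X ω} \ {ω | b < X ω} = X ⁻¹' Ioc a b := by ext; simp
  rw [hIoc]
  exact hXZ.measureReal_inter_preimage_eq_mul measurableSet_Ioc measurableSet_Ioi

def dyadicStrip (X Z : Ω → ℝ) (r : ℝ) (k : ℕ) : Set Ω :=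
  {ω | (r / 2 ^ (k + 1) < X ω ∧ X ω ≤ r / 2 ^ k) ∧ 2 ^ (k + 1) * r < Z ω}

theorem tendsto_measureReal_dyadicStrip_div [IsFiniteMeasure μ] {α : ℝ} (hX : Measurable X)
    (hXZ : IndepFun X Z μ) (hF : RegularlyVarying (fun x => μ.real {ω | x < X ω}) (-α))
    (hG : RegularlyVarying (fun x => μ.real {ω | x < Z ω}) (-α)) (k : ℕ) :
    Tendsto (fun r => μ.real (dyadicStrip X Z r k)
        / (μ.real {ω | r < X ω} * μ.real {ω | r < Z ω})) atTop (𝓝 (1 - 2 ^ (-α))) := by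
  set s : ℝ := 2 ^ k
  have hs : 0 < s := pow_pos two_pos k
  have hlim := ((hF _ (inv_pos.2 (mul_pos two_pos hs))).sub (hF _ (inv_pos.2 hs))).mul
    (hG _ (mul_pos two_pos hs))
  have hval : (((2 * s)⁻¹) ^ (-α) - (s⁻¹) ^ (-α)) * (2 * s) ^ (-α) = 1 - 2 ^ (-α) := by
    rw [inv_rpow (by positivity), inv_rpow hs.le, mul_rpow zero_le_two hs.le]
    field_simp
  rw [hval] at hlim
  refine hlim.congr' ?_
  filter_upwards [eventually_ge_atTop 0] with r hr
  have hab : (2 * s)⁻¹ * r ≤ s⁻¹ * r :=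
    mul_le_mul_of_nonneg_right (inv_anti₀ hs (by linarith)) hr
  have hstrip : dyadicStrip X Z r k
      = {ω | ((2 * s)⁻¹ * r < X ω ∧ X ω ≤ s⁻¹ * r) ∧ 2 * s * r < Z ω} := by
    simp only [dyadicStrip, s, pow_succ', div_eq_inv_mul]
  rw [hstrip, measureReal_strip_eq hX hXZ hab, ← sub_div, div_mul_div_comm]

theorem sum_measureReal_dyadicStrip_le [IsFiniteMeasure μ] (hX : Measurable X)
    (hZ : Measurable Z) {r : ℝ} (hr : 0 < r) (K : ℕ) :
    ∑ k ∈ Finset.range K, μ.real (dyadicStrip X Z r k) ≤ μ.real {ω | r * r < X ω * Z ω} := by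
  have hanti : Antitone fun n : ℕ => r / 2 ^ n := fun m n hmn =>
    div_le_div_of_nonneg_left hr.le (by positivity) (pow_le_pow_right₀ one_le_two hmn)
  have hdisj : (Finset.range K : Set ℕ).PairwiseDisjoint (dyadicStrip X Z r) := by
    intro i _ j _ hij
    refine ((hanti.pairwise_disjoint_on_Ioc_succ hij).preimage X).mono ?_ ?_ <;>
    · intro ω hω
      simpa using hω.1
  have hsub : ⋃ k ∈ Finset.range K, dyadicStrip X Z r k ⊆ {ω | r * r < X ω * Z ω} := by
    simp only [iUnion_subset_iff]
    rintro k - ω ⟨⟨hXω, -⟩, hZω⟩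
    calc r * r = r / 2 ^ (k + 1) * (2 ^ (k + 1) * r) := by field_simp
      _ < X ω * Z ω := mul_lt_mul'' hXω hZω (by positivity) (by positivity)
  have hmeas : ∀ k ∈ Finset.range K, MeasurableSet (dyadicStrip X Z r k) := fun k _ =>
    ((measurableSet_lt measurable_const hX).inter (measurableSet_le hX measurable_const)).inter
      (measurableSet_lt measurable_const hZ)
  rw [← measureReal_biUnion_finset hdisj hmeas]
  exact measureReal_mono hsub

theorem eventually_measureReal_lt_mul_measureReal_lt_le [IsFiniteMeasure μ] {α ε : ℝ}
    (hX : Measurable X) (hZ : Measurable Z) (hXZ : IndepFun X Z μ) (hα : 0 < α) (hε : 0 < ε)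
    (hF : RegularlyVarying (fun x => μ.real {ω | x < X ω}) (-α))
    (hG : RegularlyVarying (fun x => μ.real {ω | x < Z ω}) (-α))
    (hFpos : ∀ᶠ r in atTop, 0 < μ.real {ω | r < X ω})
    (hGpos : ∀ᶠ r in atTop, 0 < μ.real {ω | r < Z ω}) :
    ∀ᶠ r in atTop,
      μ.real {ω | r < X ω} * μ.real {ω | r < Z ω} ≤ ε * μ.real {ω | r * r < X ω * Z ω} := by
  set γ : ℝ := 1 - 2 ^ (-α)
  have hγ : 0 < γ := sub_pos.2 (rpow_lt_one_of_one_lt_of_neg one_lt_two (neg_neg_of_pos hα))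
  obtain ⟨K, hK⟩ := exists_nat_ge (2 / (ε * γ))
  have hKγ : 1 ≤ ε * (K * (γ / 2)) := by
    rw [div_le_iff₀ (mul_pos hε hγ)] at hK
    linarith
  have hstrip : ∀ᶠ r in atTop, ∀ k ∈ Finset.range K,
      γ / 2 * (μ.real {ω | r < X ω} * μ.real {ω | r < Z ω}) ≤ μ.real (dyadicStrip X Z r k) := by
    rw [eventually_all_finset]
    intro k _
    filter_upwards [(tendsto_measureReal_dyadicStrip_div hX hXZ hF hG k).eventually
      (lt_mem_nhds (half_lt_self hγ)), hFpos, hGpos] with r hr hFr hGr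
    exact ((lt_div_iff₀ (mul_pos hFr hGr)).1 hr).le
  filter_upwards [hstrip, eventually_gt_atTop 0] with r hstrip hr
  calc μ.real {ω | r < X ω} * μ.real {ω | r < Z ω}
      ≤ ε * (K * (γ / 2)) * (μ.real {ω | r < X ω} * μ.real {ω | r < Z ω}) :=
        le_mul_of_one_le_left (by positivity) hKγ
    _ = ε * ∑ k ∈ Finset.range K, γ / 2 * (μ.real {ω | r < X ω} * μ.real {ω | r < Z ω}) := by
        simp only [Finset.sum_const, Finset.card_range, nsmul_eq_mul]
        ring
    _ ≤ ε * μ.real {ω | r * r < X ω * Z ω} :=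
        mul_le_mul_of_nonneg_left ((Finset.sum_le_sum hstrip).trans
          (sum_measureReal_dyadicStrip_le hX hZ hr K)) hε.le

theorem abs_measureReal_lt_mul_sub_le [IsFiniteMeasure μ] (hX : Measurable X) (hZ : Measurable Z)
    (hXnn : ∀ ω, 0 ≤ X ω) (hZnn : ∀ ω, 0 ≤ Z ω) (hXZ : IndepFun X Z μ) {t x r a δ : ℝ}
    (ht : 1 ≤ t) (hr : 0 < r) (hrx : r * r = x) (ha : 0 ≤ a) (hδ : 0 ≤ δ)
    (hF : ∀ u, r ≤ u →
      |μ.real {ω | t * u < X ω} - a * μ.real {ω | u < X ω}| ≤ δ * μ.real {ω | u < X ω})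
    (hG : ∀ u, r ≤ u →
      |μ.real {ω | t * u < Z ω} - a * μ.real {ω | u < Z ω}| ≤ δ * μ.real {ω | u < Z ω})
    (hcorner : μ.real {ω | r < X ω} * μ.real {ω | r < Z ω} ≤ δ * μ.real {ω | x < X ω * Z ω}) :
    |μ.real {ω | t * x < X ω * Z ω} - a * μ.real {ω | x < X ω * Z ω}|
      ≤ (2 + a) * δ * μ.real {ω | x < X ω * Z ω} := by
  have hx : 0 < x := hrx ▸ mul_pos hr hr
  have hxr : x / r = r := by rw [← hrx, mul_div_cancel_right₀ _ hr.ne']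
  have hA := abs_measureReal_lt_mul_le_sub_le hX hZ hZnn hXZ (by linarith) hx
    (fun u hu => hF u (hxr ▸ hu))
  have hA' := abs_measureReal_lt_mul_le_sub_le hZ hX hXnn hXZ.symm (by linarith) hx
    (fun u hu => hG u (hxr ▸ hu))
  have hC : ∀ z, μ.real {ω | z < X ω * Z ω ∧ r < X ω ∧ r < Z ω}
      ≤ μ.real {ω | r < X ω} * μ.real {ω | r < Z ω} := fun z =>
    (measureReal_mono fun ω h => h.2).trans_eq
      (hXZ.measureReal_inter_preimage_eq_mul measurableSet_Ioi measurableSet_Ioi)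
  have hC₁ := hC (t * x)
  have hC₀ := hC x
  rw [measureReal_lt_mul_eq_add hX hZ hXnn hZnn (hrx.le.trans (le_mul_of_one_le_left hx.le ht))]
  rw [measureReal_lt_mul_eq_add hX hZ hXnn hZnn hrx.le] at hcorner ⊢
  rw [abs_le] at hA hA' ⊢
  have hC₁nn : 0 ≤ μ.real {ω | t * x < X ω * Z ω ∧ r < X ω ∧ r < Z ω} := measureReal_nonneg
  have hC₀nn : 0 ≤ μ.real {ω | x < X ω * Z ω ∧ r < X ω ∧ r < Z ω} := measureReal_nonneg
  have hδC₀ := mul_nonneg hδ hC₀nn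
  have haC₀ := mul_nonneg ha hC₀nn
  have haC₀le := mul_le_mul_of_nonneg_left (hC₀.trans hcorner) ha
  constructor <;> linarith

theorem regularlyVarying_measureReal_lt_mul [IsFiniteMeasure μ] {α : ℝ} (hX : Measurable X)
    (hZ : Measurable Z) (hXnn : ∀ ω, 0 ≤ X ω) (hZnn : ∀ ω, 0 ≤ Z ω) (hXZ : IndepFun X Z μ)
    (hα : 0 < α)
    (hF : RegularlyVarying (fun x => μ.real {ω | x < X ω}) (-α))
    (hG : RegularlyVarying (fun x => μ.real {ω | x < Z ω}) (-α))
    (hFpos : ∀ᶠ x in atTop, 0 < μ.real {ω | x < X ω})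
    (hGpos : ∀ᶠ x in atTop, 0 < μ.real {ω | x < Z ω})
    (hT : ∀ᶠ x in atTop, 0 < μ.real {ω | x < X ω * Z ω}) :
    RegularlyVarying (fun x => μ.real {ω | x < X ω * Z ω}) (-α) := by
  refine RegularlyVarying.of_one_le fun t ht => (tendsto_div_iff_abs_sub_le hT).2 fun ε hε => ?_
  have ha : 0 ≤ t ^ (-α) := rpow_nonneg (by linarith) _
  set δ := ε / (2 + t ^ (-α))
  have hδ : 0 < δ := by positivity
  obtain ⟨uF, huF⟩ := eventually_atTop.1
    ((tendsto_div_iff_abs_sub_le hFpos).1 (hF t (by linarith)) δ hδ)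
  obtain ⟨uG, huG⟩ := eventually_atTop.1
    ((tendsto_div_iff_abs_sub_le hGpos).1 (hG t (by linarith)) δ hδ)
  filter_upwards [tendsto_sqrt_atTop.eventually_ge_atTop uF,
    tendsto_sqrt_atTop.eventually_ge_atTop uG,
    tendsto_sqrt_atTop.eventually
      (eventually_measureReal_lt_mul_measureReal_lt_le hX hZ hXZ hα hδ hF hG hFpos hGpos),
    eventually_gt_atTop 0] with x hxF hxG hcorner hx
  have hrx : √x * √x = x := mul_self_sqrt hx.le
  rw [hrx] at hcorner
  calc _ ≤ (2 + t ^ (-α)) * δ * μ.real {ω | x < X ω * Z ω} :=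
        abs_measureReal_lt_mul_sub_le hX hZ hXnn hZnn hXZ ht (sqrt_pos.2 hx) hrx ha hδ.le
          (fun u hu => huF u (hxF.trans hu)) (fun u hu => huG u (hxG.trans hu)) hcorner
    _ = ε * μ.real {ω | x < X ω * Z ω} := by
        rw [mul_div_cancel₀ _ (by positivity : (2 + t ^ (-α)) ≠ 0)]

theorem measureReal_lt_mul_le_of_bounded [IsFiniteMeasure μ] (hZnn : ∀ ω, 0 ≤ Z ω) {x₀ : ℝ}
    (hx₀ : 0 ≤ x₀) (hXbdd : μ {ω | x₀ < X ω} = 0) (x : ℝ) :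
    μ.real {ω | x₀ * x < X ω * Z ω} ≤ μ.real {ω | x < Z ω} := by
  have hsub : {ω | x₀ * x < X ω * Z ω} ⊆ {ω | x₀ < X ω} ∪ {ω | x < Z ω} := by
    intro ω hω
    by_contra! h
    simp only [mem_union, mem_ofPred_eq, not_or, not_lt] at h
    exact (mul_le_mul h.1 h.2 (hZnn ω) hx₀).not_gt hω
  calc _ ≤ μ.real ({ω | x₀ < X ω} ∪ {ω | x < Z ω}) := measureReal_mono hsub
    _ ≤ μ.real {ω | x₀ < X ω} + μ.real {ω | x < Z ω} := measureReal_union_le _ _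
    _ = μ.real {ω | x < Z ω} := by rw [measureReal_def, hXbdd, ENNReal.toReal_zero, zero_add]

theorem regularlyVarying_measureReal_lt_mul_of_bounded [IsFiniteMeasure μ] {ρ x₀ : ℝ}
    (hX : Measurable X) (hZ : Measurable Z) (hXnn : ∀ ω, 0 ≤ X ω) (hXZ : IndepFun X Z μ)
    (hx₀ : 0 < x₀) (hXbdd : μ {ω | x₀ < X ω} = 0)
    (hG : RegularlyVarying (fun x => μ.real {ω | x < Z ω}) ρ)
    (hGpos : ∀ᶠ x in atTop, 0 < μ.real {ω | x < Z ω})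
    (hT : ∀ᶠ x in atTop, 0 < μ.real {ω | x < X ω * Z ω}) :
    RegularlyVarying (fun x => μ.real {ω | x < X ω * Z ω}) ρ := by
  intro t ht
  refine (tendsto_div_iff_abs_sub_le hT).2 fun ε hε => ?_
  obtain ⟨u₀, hu₀⟩ := eventually_atTop.1
    ((tendsto_div_iff_abs_sub_le hGpos).1 (hG t ht) ε hε)
  have hconull : ∀ z, μ.real {ω | z < X ω * Z ω} = μ.real {ω | z < Z ω * X ω ∧ X ω ≤ x₀} := by
    intro z
    simp only [measureReal_def, mul_comm (X _)]
    rw [ofPred_and, measure_inter_conull]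
    simpa [compl_ofPred] using hXbdd
  filter_upwards [eventually_ge_atTop (u₀ * x₀), eventually_gt_atTop 0] with x hxu hx
  simp only [hconull]
  exact abs_measureReal_lt_mul_le_sub_le hZ hX hXnn hXZ.symm ht hx
    fun u hu => hu₀ u (((le_div_iff₀ hx₀).2 hxu).trans hu)

theorem regularlyVarying_measureReal_lt_mul_of_slowlyVarying [IsFiniteMeasure μ] {α : ℝ}
    {L L' : ℝ → ℝ} (hX : Measurable X) (hZ : Measurable Z) (hXnn : ∀ ω, 0 ≤ X ω)
    (hZnn : ∀ ω, 0 ≤ Z ω) (hXZ : IndepFun X Z μ) (hα : 0 < α) (hL : SlowlyVarying L)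
    (hL' : SlowlyVarying L')
    (htailX : ∀ x : ℝ, 0 < x → μ {ω | X ω > x} = ENNReal.ofReal (x ^ (-α) * L x))
    (htailZ : ∀ x : ℝ, 0 < x → μ {ω | Z ω > x} = ENNReal.ofReal (x ^ (-α) * L' x))
    (hT : ∀ x, 0 < x → 0 < μ.real {ω | x < X ω * Z ω}) :
    RegularlyVarying (fun x => μ.real {ω | x < X ω * Z ω}) (-α) := by
  have hTev : ∀ᶠ x in atTop, 0 < μ.real {ω | x < X ω * Z ω} :=
    (eventually_gt_atTop 0).mono hT
  have hpos : ∀ {W : Ω → ℝ}, (∀ x, 0 < x → μ {ω | W ω > x} ≠ 0) →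
      ∀ᶠ x in atTop, 0 < μ.real {ω | x < W ω} := fun hW =>
    (eventually_gt_atTop 0).mono fun x hx => ENNReal.toReal_pos (hW x hx) (measure_ne_top μ _)
  by_cases hXbdd : ∃ x₀, 0 < x₀ ∧ μ {ω | X ω > x₀} = 0
  · obtain ⟨x₀, hx₀, hXx₀⟩ := hXbdd
    have hZpos : ∀ x, 0 < x → μ {ω | Z ω > x} ≠ 0 := by
      intro x hx hZx
      have hle := measureReal_lt_mul_le_of_bounded hZnn hx₀.le hXx₀ x
      rw [show μ.real {ω | x < Z ω} = (μ {ω | Z ω > x}).toReal from rfl, hZx,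
        ENNReal.toReal_zero] at hle
      exact (hT _ (mul_pos hx₀ hx)).not_ge hle
    exact regularlyVarying_measureReal_lt_mul_of_bounded hX hZ hXnn hXZ hx₀ hXx₀
      (regularlyVarying_measureReal_lt_of_slowlyVarying hL' htailZ hZpos) (hpos hZpos) hTev
  push Not at hXbdd
  by_cases hZbdd : ∃ x₁, 0 < x₁ ∧ μ {ω | Z ω > x₁} = 0
  · obtain ⟨x₁, hx₁, hZx₁⟩ := hZbdd
    have hcomm : ∀ x, μ.real {ω | x < Z ω * X ω} = μ.real {ω | x < X ω * Z ω} := by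
      simp only [mul_comm (Z _), implies_true]
    simp only [← hcomm] at hTev ⊢
    exact regularlyVarying_measureReal_lt_mul_of_bounded hZ hX hZnn hXZ.symm hx₁ hZx₁
      (regularlyVarying_measureReal_lt_of_slowlyVarying hL htailX hXbdd) (hpos hXbdd) hTev
  push Not at hZbdd
  exact regularlyVarying_measureReal_lt_mul hX hZ hXnn hZnn hXZ hα
    (regularlyVarying_measureReal_lt_of_slowlyVarying hL htailX hXbdd)
    (regularlyVarying_measureReal_lt_of_slowlyVarying hL' htailZ hZbdd)
    (hpos hXbdd) (hpos hZbdd) hTev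

end Tails

/-- Where `T` vanishes the value is `-1` rather than `0`: `ENNReal.ofReal` still sends it to `0`,
and a function that is eventually `-1` is slowly varying, while one that is eventually `0` is not,
because `0 / 0 = 0`. -/
noncomputable def slowlyVaryingFactor (α : ℝ) (T : ℝ → ℝ) (x : ℝ) : ℝ :=
  if T x = 0 then -1 else x ^ α * T x

theorem ofReal_rpow_neg_mul_slowlyVaryingFactor {α x : ℝ} {T : ℝ → ℝ} (hx : 0 < x) :
    ENNReal.ofReal (x ^ (-α) * slowlyVaryingFactor α T x) = ENNReal.ofReal (T x) := by
  unfold slowlyVaryingFactor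
  split_ifs with h
  · rw [h, ENNReal.ofReal_zero, ENNReal.ofReal_eq_zero]
    nlinarith [rpow_pos_of_pos hx (-α)]
  · rw [← mul_assoc, ← rpow_add hx, neg_add_cancel, rpow_zero, one_mul]

theorem RegularlyVarying.slowlyVarying_slowlyVaryingFactor {α : ℝ} {T : ℝ → ℝ}
    (hT : RegularlyVarying T (-α)) (hpos : ∀ᶠ x in atTop, T x ≠ 0) :
    SlowlyVarying (slowlyVaryingFactor α T) := by
  rw [regularlyVarying_iff_slowlyVarying, neg_neg] at hT
  refine hT.congr' ?_
  filter_upwards [hpos] with x hx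
  simp [slowlyVaryingFactor, hx]

theorem slowlyVarying_slowlyVaryingFactor_of_eventually_eq_zero {α : ℝ} {T : ℝ → ℝ}
    (h : ∀ᶠ x in atTop, T x = 0) : SlowlyVarying (slowlyVaryingFactor α T) :=
  slowlyVarying_of_eventuallyEq_const (c := -1) (by norm_num) <| by
    filter_upwards [h] with x hx
    simp [slowlyVaryingFactor, hx]

/-- Embrechts–Goldie: if `Y` and `Y'` are independent nonnegative random variables, both
regularly varying with index `α' > 0`, then the product `Y Y'` is regularly varying with
the same index: `P(Y Y' > x) = x^(-α') L₁(x)` for some slowly varying `L₁`. -/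
theorem product_regularly_varying {Ω : Type*} [MeasurableSpace Ω] (μ : Measure Ω)
    [IsProbabilityMeasure μ] (Y Y' : Ω → ℝ) (hY : Measurable Y) (hY' : Measurable Y')
    (hYnn : ∀ ω, 0 ≤ Y ω) (hY'nn : ∀ ω, 0 ≤ Y' ω)
    (hindep : IndepFun Y Y' μ)
    (α' : ℝ) (hα' : 0 < α') (L L' : ℝ → ℝ) (hL : SlowlyVarying L) (hL' : SlowlyVarying L')
    (htailY : ∀ x : ℝ, 0 < x → μ {ω | Y ω > x} = ENNReal.ofReal (x ^ (-α') * L x))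
    (htailY' : ∀ x : ℝ, 0 < x → μ {ω | Y' ω > x} = ENNReal.ofReal (x ^ (-α') * L' x)) :
    ∃ L₁ : ℝ → ℝ, SlowlyVarying L₁ ∧
      ∀ x : ℝ, 0 < x → μ {ω | Y ω * Y' ω > x} = ENNReal.ofReal (x ^ (-α') * L₁ x) := by
  set T := fun x => μ.real {ω | x < Y ω * Y' ω}
  refine ⟨slowlyVaryingFactor α' T, ?_, fun x hx => ?_⟩
  · by_cases hT : ∀ x, 0 < x → 0 < T x
    · exact (regularlyVarying_measureReal_lt_mul_of_slowlyVarying hY hY' hYnn hY'nn hindep hα' hL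
        hL' htailY htailY' hT).slowlyVarying_slowlyVaryingFactor
        ((eventually_gt_atTop 0).mono fun x hx => (hT x hx).ne')
    push Not at hT
    obtain ⟨x₂, -, hTx₂⟩ := hT
    refine slowlyVarying_slowlyVaryingFactor_of_eventually_eq_zero ?_
    filter_upwards [eventually_ge_atTop x₂] with x hx
    exact le_antisymm ((measureReal_mono fun ω h => hx.trans_lt h).trans hTx₂) measureReal_nonneg
  · rw [ofReal_rpow_neg_mul_slowlyVaryingFactor hx]
    exact (ENNReal.ofReal_toReal (measure_ne_top μ _)).symm
end

section
/- Let $f_\gamma(x) = \frac{1}{2\pi x \gamma}\sqrt{(b-x)(x-a)}$ for $a \le x \le b$ and $f_\gamma(x) = 0$ otherwise, where $a = (1-\sqrt\gamma)^2$, $b = (1+\sqrt\gamma)^2$, and $\gamma \in (0,1]$. Then $\int_a^b f_\gamma(x)\,dx = 1$, i.e., the Marčenko–Pastur density integrates to one. -/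
open MeasureTheory Real Set

/-!
For `0 ≤ a < b` the function
  `F(x) = √((b - x)(x - a)) + (a + b)/2 · arcsin ((2x - a - b)/(b - a))`
          `- √(ab) · arcsin (((a + b)x - 2ab)/((b - a)x))`
is an antiderivative of `√((b - x)(x - a)) / x` on `(a, b)`, and both arcsines equal `±π/2` at
the endpoints, so `∫_a^b √((b - x)(x - a)) / x dx = π ((a + b)/2 - √(ab))`. For the
Marčenko–Pastur endpoints `a + b = 2(1 + γ)` and `√(ab) = 1 - γ`, so this integral is `2πγ`.
When `a = 0` the last term of `F` vanishes, and the singularity of the integrand at `0` needs no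
separate estimate: a nonnegative derivative is automatically integrable.
-/

variable {a b x : ℝ}

lemma sub_mul_sub_pos (hx : x ∈ Ioo a b) : 0 < (b - x) * (x - a) :=
  mul_pos (sub_pos.2 hx.2) (sub_pos.2 hx.1)

lemma hasDerivAt_sqrt_sub_mul_sub (hx : x ∈ Ioo a b) :
    HasDerivAt (fun y => √((b - y) * (y - a)))
      ((a + b - 2 * x) / (2 * √((b - x) * (x - a)))) x := by
  refine (((hasDerivAt_id x).const_sub b).mul ((hasDerivAt_id x).sub_const a)).sqrt
    (sub_mul_sub_pos hx).ne' |>.congr_deriv ?_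
  simp only [id_eq, Pi.mul_apply]
  ring

lemma sqrt_one_sub_sq_affine (hx : x ∈ Ioo a b) :
    √(1 - ((2 * x - a - b) / (b - a)) ^ 2) = 2 * √((b - x) * (x - a)) / (b - a) := by
  have hba : 0 < b - a := by linarith [hx.1, hx.2]
  have h : 1 - ((2 * x - a - b) / (b - a)) ^ 2
      = 2 ^ 2 * ((b - x) * (x - a)) / (b - a) ^ 2 := by
    field_simp; ring
  rw [h, sqrt_div' _ (by positivity), sqrt_mul (by positivity), sqrt_sq hba.le,
    sqrt_sq zero_le_two]

lemma hasDerivAt_arcsin_affine (hx : x ∈ Ioo a b) :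
    HasDerivAt (fun y => arcsin ((2 * y - a - b) / (b - a)))
      (1 / √((b - x) * (x - a))) x := by
  have hba : 0 < b - a := by linarith [hx.1, hx.2]
  have h₁ : (2 * x - a - b) / (b - a) ≠ -1 := by
    rw [ne_eq, div_eq_iff hba.ne']; linarith [hx.1]
  have h₂ : (2 * x - a - b) / (b - a) ≠ 1 := by
    rw [ne_eq, div_eq_iff hba.ne']; linarith [hx.2]
  refine (hasDerivAt_arcsin h₁ h₂).comp x
    ((((hasDerivAt_id x).const_mul 2).sub_const a).sub_const b |>.div_const (b - a))
    |>.congr_deriv ?_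
  rw [sqrt_one_sub_sq_affine hx]
  field_simp

lemma sqrt_one_sub_sq_moebius (ha : 0 < a) (hx : x ∈ Ioo a b) :
    √(1 - (((a + b) * x - 2 * a * b) / ((b - a) * x)) ^ 2)
      = 2 * √(a * b) * √((b - x) * (x - a)) / ((b - a) * x) := by
  have hba : 0 < b - a := by linarith [hx.1, hx.2]
  have hx₀ : 0 < x := ha.trans hx.1
  have hab : 0 < a * b := mul_pos ha (ha.trans (hx.1.trans hx.2))
  have h : 1 - (((a + b) * x - 2 * a * b) / ((b - a) * x)) ^ 2
      = 2 ^ 2 * (a * b) * ((b - x) * (x - a)) / ((b - a) * x) ^ 2 := by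
    field_simp; ring
  rw [h, sqrt_div' _ (by positivity), sqrt_mul (by positivity), sqrt_mul (by positivity),
    sqrt_sq (mul_pos hba hx₀).le, sqrt_sq zero_le_two]

lemma hasDerivAt_arcsin_moebius (ha : 0 < a) (hx : x ∈ Ioo a b) :
    HasDerivAt (fun y => arcsin (((a + b) * y - 2 * a * b) / ((b - a) * y)))
      (√(a * b) / (x * √((b - x) * (x - a)))) x := by
  have hba : 0 < b - a := by linarith [hx.1, hx.2]
  have hx₀ : 0 < x := ha.trans hx.1
  have hQ : 0 < √((b - x) * (x - a)) := sqrt_pos.2 (sub_mul_sub_pos hx)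
  have hab : 0 < a * b := mul_pos ha (ha.trans (hx.1.trans hx.2))
  have hpos : 0 < 1 - (((a + b) * x - 2 * a * b) / ((b - a) * x)) ^ 2 := by
    rw [← sqrt_pos, sqrt_one_sub_sq_moebius ha hx]; positivity
  have h₁ : ((a + b) * x - 2 * a * b) / ((b - a) * x) ≠ -1 := by
    intro h; rw [h] at hpos; norm_num at hpos
  have h₂ : ((a + b) * x - 2 * a * b) / ((b - a) * x) ≠ 1 := by
    intro h; rw [h] at hpos; norm_num at hpos
  refine (hasDerivAt_arcsin h₁ h₂).comp x
    ((((hasDerivAt_id x).const_mul (a + b)).sub_const (2 * a * b)).div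
      ((hasDerivAt_id x).const_mul (b - a)) (by positivity))
    |>.congr_deriv ?_
  rw [sqrt_one_sub_sq_moebius ha hx]
  simp only [id_eq]
  field_simp
  rw [sq_sqrt hab.le]
  ring

lemma hasDerivAt_sqrt_mul_mul_arcsin_moebius (ha : 0 ≤ a) (hx : x ∈ Ioo a b) :
    HasDerivAt (fun y => √(a * b) * arcsin (((a + b) * y - 2 * a * b) / ((b - a) * y)))
      (a * b / (x * √((b - x) * (x - a)))) x := by
  rcases ha.eq_or_lt with rfl | ha
  · simpa using hasDerivAt_const x (0 : ℝ)
  · refine (hasDerivAt_arcsin_moebius ha hx).const_mul _ |>.congr_deriv ?_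
    rw [← mul_div_assoc, mul_self_sqrt (mul_pos ha (ha.trans (hx.1.trans hx.2))).le]

noncomputable def sqrtMulSubDivAntideriv (a b x : ℝ) : ℝ :=
  √((b - x) * (x - a)) + (a + b) / 2 * arcsin ((2 * x - a - b) / (b - a))
    - √(a * b) * arcsin (((a + b) * x - 2 * a * b) / ((b - a) * x))

lemma continuousOn_sqrtMulSubDivAntideriv (ha : 0 ≤ a) (hab : a < b) :
    ContinuousOn (sqrtMulSubDivAntideriv a b) (Icc a b) := by
  refine ContinuousOn.sub (by fun_prop) ?_
  rcases ha.eq_or_lt with rfl | ha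
  · simpa using continuousOn_const
  · refine continuousOn_const.mul (continuous_arcsin.comp_continuousOn ?_)
    exact ContinuousOn.div (by fun_prop) (by fun_prop)
      fun y hy => (mul_pos (sub_pos.2 hab) (ha.trans_le hy.1)).ne'

lemma hasDerivAt_sqrtMulSubDivAntideriv (ha : 0 ≤ a) (hx : x ∈ Ioo a b) :
    HasDerivAt (sqrtMulSubDivAntideriv a b) (√((b - x) * (x - a)) / x) x := by
  have hx₀ : 0 < x := ha.trans_lt hx.1
  have hQ : 0 < √((b - x) * (x - a)) := sqrt_pos.2 (sub_mul_sub_pos hx)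
  refine ((hasDerivAt_sqrt_sub_mul_sub hx).add
    ((hasDerivAt_arcsin_affine hx).const_mul _)).sub
    (hasDerivAt_sqrt_mul_mul_arcsin_moebius ha hx) |>.congr_deriv ?_
  field_simp
  rw [sq_sqrt (sub_mul_sub_pos hx).le]
  ring

lemma sqrtMulSubDivAntideriv_right (ha : 0 ≤ a) (hab : a < b) :
    sqrtMulSubDivAntideriv a b b = π / 2 * ((a + b) / 2 - √(a * b)) := by
  have h₁ : (2 * b - a - b) / (b - a) = 1 := by
    rw [div_eq_one_iff_eq (sub_pos.2 hab).ne']; ring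
  have h₂ : ((a + b) * b - 2 * a * b) / ((b - a) * b) = 1 := by
    rw [div_eq_one_iff_eq (mul_pos (sub_pos.2 hab) (ha.trans_lt hab)).ne']; ring
  simp only [sqrtMulSubDivAntideriv, sub_self, zero_mul, sqrt_zero, h₁, h₂, arcsin_one]
  ring

lemma sqrtMulSubDivAntideriv_left (ha : 0 ≤ a) (hab : a < b) :
    sqrtMulSubDivAntideriv a b a = -(π / 2 * ((a + b) / 2 - √(a * b))) := by
  have h₁ : (2 * a - a - b) / (b - a) = -1 := by
    rw [div_eq_iff (sub_pos.2 hab).ne']; ring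
  have h₂ : √(a * b) * arcsin (((a + b) * a - 2 * a * b) / ((b - a) * a))
      = √(a * b) * -(π / 2) := by
    rcases ha.eq_or_lt with rfl | ha
    · simp
    · have h : ((a + b) * a - 2 * a * b) / ((b - a) * a) = -1 := by
        rw [div_eq_iff (mul_pos (sub_pos.2 hab) ha).ne']; ring
      rw [h, arcsin_neg, arcsin_one]
  simp only [sqrtMulSubDivAntideriv, sub_self, mul_zero, sqrt_zero, h₁, h₂, arcsin_neg,
    arcsin_one]
  ring

theorem integral_sqrt_sub_mul_sub_div_self (ha : 0 ≤ a) (hab : a ≤ b) :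
    ∫ x in a..b, √((b - x) * (x - a)) / x = π * ((a + b) / 2 - √(a * b)) := by
  rcases hab.eq_or_lt with rfl | hab
  · rw [intervalIntegral.integral_same, ← sq, sqrt_sq ha]; ring
  have hderiv := fun x (hx : x ∈ Ioo a b) => hasDerivAt_sqrtMulSubDivAntideriv ha hx
  have hcont := continuousOn_sqrtMulSubDivAntideriv ha hab
  have hint : IntervalIntegrable (fun x => √((b - x) * (x - a)) / x) volume a b :=
    (intervalIntegrable_iff_integrableOn_Ioc_of_le hab.le).2 <|
      intervalIntegral.integrableOn_deriv_of_nonneg hcont hderiv fun x hx => by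
        have := ha.trans_lt hx.1; positivity
  rw [intervalIntegral.integral_eq_sub_of_hasDerivAt_of_le hab.le hcont hderiv hint,
    sqrtMulSubDivAntideriv_right ha hab, sqrtMulSubDivAntideriv_left ha hab]
  ring

/-- The Marčenko–Pastur density with ratio parameter `γ ∈ (0,1]`, supported on `[a,b]`
with `a = (1-√γ)²` and `b = (1+√γ)²`, integrates to one. -/
theorem marcenko_pastur_density_integrates_to_one (γ : ℝ) (hγ : γ ∈ Set.Ioc (0 : ℝ) 1)
    (a b : ℝ) (ha : a = (1 - Real.sqrt γ) ^ 2) (hb : b = (1 + Real.sqrt γ) ^ 2) :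
    ∫ x in a..b, 1 / (2 * Real.pi * x * γ) * Real.sqrt ((b - x) * (x - a)) = 1 := by
  obtain ⟨hγ₀, hγ₁⟩ := hγ
  have hsqrt : √γ ^ 2 = γ := sq_sqrt hγ₀.le
  have hab : a ≤ b := by rw [ha, hb]; nlinarith [sqrt_nonneg γ]
  have hsum : a + b = 2 * (1 + γ) := by rw [ha, hb]; linear_combination 2 * hsqrt
  have hprod : a * b = (1 - γ) ^ 2 := by
    rw [ha, hb]; linear_combination (√γ ^ 2 + γ - 2) * hsqrt
  have hintegrand : ∀ x, 1 / (2 * π * x * γ) * √((b - x) * (x - a))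
      = 1 / (2 * π * γ) * (√((b - x) * (x - a)) / x) := fun x => by ring
  simp_rw [hintegrand]
  rw [intervalIntegral.integral_const_mul,
    integral_sqrt_sub_mul_sub_div_self (ha ▸ sq_nonneg _) hab, hsum, hprod,
    sqrt_sq (sub_nonneg.2 hγ₁)]
  field_simp
  ring
end
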